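/- arXiv:2007.08250 — 2 statements merged into one kernel-verified Lean document; each statement's English description precedes it below -/
import Mathlib

section
/- Let Z be a uniformly convex real Banach space, let M ⊆ Z be a nonempty set, let z ∈ Z, and suppose m̄ ∈ M satisfies ‖z − m̄‖ = inf_{m ∈ M} ‖z − m‖. Then for every t ∈ (0,1), the point m̄ is the unique nearest point in M to z_t := t m̄ + (1−t) z; that is, ‖z_t − m̄‖ = inf_{m ∈ M} ‖z_t − m‖ and every m ∈ M with ‖z_t − m‖ = inf_{m' ∈ M} ‖z_t − m'‖ equals m̄. -/
/-- **Stability of nearest points along the segment** (Kainen–Kůrková–Vogt-type result).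
Let `Z` be a uniformly convex real Banach space, `M ⊆ Z` nonempty, `z ∈ Z`, and let
`m̄ ∈ M` be a nearest point to `z` in `M`. Then for every `t ∈ (0, 1)`, the point `m̄`
is the unique nearest point in `M` to `z_t = t • m̄ + (1 - t) • z`. -/
theorem unique_nearest_point_on_segment
    {Z : Type*} [NormedAddCommGroup Z] [NormedSpace ℝ Z] [CompleteSpace Z]
    [UniformConvexSpace Z]
    (M : Set Z) (hM : M.Nonempty) (z : Z) (mbar : Z) (hmem : mbar ∈ M)
    (hnear : ‖z - mbar‖ = sInf ((fun m => ‖z - m‖) '' M))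
    (t : ℝ) (ht0 : 0 < t) (ht1 : t < 1) :
    ‖(t • mbar + (1 - t) • z) - mbar‖ =
        sInf ((fun m => ‖(t • mbar + (1 - t) • z) - m‖) '' M) ∧
      ∀ m ∈ M,
        ‖(t • mbar + (1 - t) • z) - m‖ =
            sInf ((fun m' => ‖(t • mbar + (1 - t) • z) - m'‖) '' M) →
          m = mbar := by
  set zt := t • mbar + (1 - t) • z with hzt
  set d := ‖z - mbar‖ with hd
  have ht1' : 0 < 1 - t := by linarith
  have hzt_mbar : zt - mbar = (1 - t) • (z - mbar) := by rw [hzt]; module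
  have hz_zt : z - zt = t • (z - mbar) := by rw [hzt]; module
  have hnorm1 : ‖zt - mbar‖ = (1 - t) * d := by
    rw [hzt_mbar, norm_smul, Real.norm_eq_abs, abs_of_pos ht1']
  have hnorm2 : ‖z - zt‖ = t * d := by
    rw [hz_zt, norm_smul, Real.norm_eq_abs, abs_of_pos ht0]
  -- d is a lower bound for distances from z
  have hdle : ∀ m ∈ M, d ≤ ‖z - m‖ := by
    intro m hm
    rw [hnear]
    exact csInf_le ⟨0, fun x ⟨y, _, hy⟩ => hy ▸ norm_nonneg _⟩ ⟨m, hm, rfl⟩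
  have hlb : ∀ m ∈ M, (1 - t) * d ≤ ‖zt - m‖ := by
    intro m hm
    have h1 : ‖z - m‖ ≤ ‖z - zt‖ + ‖zt - m‖ := by
      simpa using norm_add_le (z - zt) (zt - m)
    have := hdle m hm
    nlinarith [norm_nonneg (zt - m)]
  have hsinf : sInf ((fun m => ‖zt - m‖) '' M) = (1 - t) * d := by
    apply le_antisymm
    · exact csInf_le ⟨0, fun x ⟨y, _, hy⟩ => hy ▸ norm_nonneg _⟩
        ⟨mbar, hmem, hnorm1⟩
    · exact le_csInf (hM.image _) fun x ⟨y, hy, hxy⟩ => hxy ▸ hlb y hy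
  refine ⟨by rw [hnorm1, hsinf], ?_⟩
  intro m hm hmin
  rw [hsinf] at hmin
  -- triangle equality
  have hzm : ‖z - m‖ = d := by
    have h1 : ‖z - m‖ ≤ ‖z - zt‖ + ‖zt - m‖ := by
      simpa using norm_add_le (z - zt) (zt - m)
    have := hdle m hm
    rw [hmin, hnorm2] at h1
    linarith
  rcases eq_or_lt_of_le (norm_nonneg (z - mbar)) with hd0 | hd0
  · -- d = 0 : z = mbar, zt = mbar, and m = zt
    have hzmb : z - mbar = 0 := by
      have h0 : ‖z - mbar‖ = 0 := hd0.symm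
      rwa [norm_eq_zero] at h0
    have hztm : zt - m = 0 := by
      rw [← norm_eq_zero, hmin, hd, ← hd0]
      ring
    have h1 : zt = m := by rwa [sub_eq_zero] at hztm
    have h2 : zt = mbar := by
      have h3 := hzt_mbar
      rw [hzmb, smul_zero, sub_eq_zero] at h3
      exact h3
    rw [← h1, h2]
  · have hdpos : (0:ℝ) < d := hd0
    have heq : ‖(z - zt) + (zt - m)‖ = ‖z - zt‖ + ‖zt - m‖ := by
      have : (z - zt) + (zt - m) = z - m := by abel
      rw [this, hzm, hnorm2, hmin]; ring
    have hray : SameRay ℝ (z - zt) (zt - m) := sameRay_iff_norm_add.mpr heq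
    have hne : z - zt ≠ 0 := by
      rw [← norm_ne_zero_iff, hnorm2]
      positivity
    obtain ⟨r, hr0, hr⟩ := hray.exists_nonneg_left hne
    have hrnorm : ‖zt - m‖ = r * ‖z - zt‖ := by
      rw [← hr, norm_smul, Real.norm_eq_abs, abs_of_nonneg hr0]
    rw [hmin, hnorm2] at hrnorm
    have hrval : r = (1 - t) / t := by
      field_simp
      nlinarith
    have : zt - m = zt - mbar := by
      rw [← hr, hrval, hz_zt, hzt_mbar, smul_smul]
      congr 1
      field_simp
    exact sub_right_injective this
end

section
/- Consider ℝ² equipped with the maximum norm ‖(a,b)‖_∞ := max(|a|,|b|), and define g : ℝ² → ℝ by g(u) := ‖(1,0) − u‖_∞² + ‖u‖_∞². Then the infimum of g over ℝ² equals 1/2, and g attains this infimum at more than one point; in particular, every point u = (1/2, s) with |s| ≤ 1/2 is a global minimizer of g. Hence the problem min_{y,u ∈ ℝ²} ‖(1,0) − y‖_∞² + ‖u‖_∞² subject to y = u has multiple global solutions even though the constraint map is the identity. -/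
lemma aux_norm_mk (a b : ℝ) : ‖((a, b) : ℝ × ℝ)‖ = max |a| |b| := by
  simp [Prod.norm_def, Real.norm_eq_abs]

lemma aux_val_half (s : ℝ) (hs : |s| ≤ 1/2) :
    ‖((1, 0) : ℝ × ℝ) - ((1/2 : ℝ), s)‖ ^ 2 + ‖((1/2 : ℝ), s)‖ ^ 2 = 1/2 := by
  have h1 : ((1, 0) : ℝ × ℝ) - ((1/2 : ℝ), s) = ((1/2 : ℝ), -s) := by
    rw [Prod.ext_iff]; constructor <;> simp <;> ring
  rw [h1, aux_norm_mk, aux_norm_mk, abs_neg]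
  have : |(1/2 : ℝ)| = 1/2 := by norm_num
  rw [this, max_eq_left hs]
  norm_num

lemma aux_lb (v : ℝ × ℝ) : 1/2 ≤ ‖((1, 0) : ℝ × ℝ) - v‖ ^ 2 + ‖v‖ ^ 2 := by
  obtain ⟨x, y⟩ := v
  have h1 : ((1, 0) : ℝ × ℝ) - (x, y) = ((1 - x : ℝ), -y) := by
    rw [Prod.ext_iff]; constructor <;> simp <;> ring
  rw [h1, aux_norm_mk, aux_norm_mk]
  have h2 : |1 - x| ≤ max |1 - x| |(-y)| := le_max_left _ _
  have h3 : |x| ≤ max |x| |y| := le_max_left _ _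
  have h4 : (1 - x)^2 ≤ (max |1 - x| |(-y)|)^2 := by
    have := sq_abs (1 - x); nlinarith [abs_nonneg (1 - x)]
  have h5 : x^2 ≤ (max |x| |y|)^2 := by
    have := sq_abs x; nlinarith [abs_nonneg x]
  nlinarith [sq_nonneg (1 - 2*x)]

lemma aux_min (s : ℝ) (hs : |s| ≤ 1/2) (v : ℝ × ℝ) :
    ‖((1, 0) : ℝ × ℝ) - ((1/2 : ℝ), s)‖ ^ 2 + ‖((1/2 : ℝ), s)‖ ^ 2 ≤
      ‖((1, 0) : ℝ × ℝ) - v‖ ^ 2 + ‖v‖ ^ 2 := by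
  rw [aux_val_half s hs]; exact aux_lb v

/-- On `ℝ²` with the maximum norm (which is the norm of `ℝ × ℝ` in Mathlib, as recorded
by the first conjunct), the function `g(u) = ‖(1,0) - u‖_∞² + ‖u‖_∞²` has infimum `1/2`,
every point `(1/2, s)` with `|s| ≤ 1/2` is a global minimizer, and `g` attains its
infimum at more than one point. Hence `min ‖(1,0) - y‖_∞² + ‖u‖_∞²` s.t. `y = u` has
multiple global solutions although the constraint map is the identity. -/
theorem sup_norm_tracking_problem_multiple_minimizers :
    (∀ a b : ℝ, ‖((a, b) : ℝ × ℝ)‖ = max |a| |b|) ∧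
      IsGLB (Set.range fun u : ℝ × ℝ => ‖((1, 0) : ℝ × ℝ) - u‖ ^ 2 + ‖u‖ ^ 2)
        (1 / 2) ∧
      (∀ s : ℝ, |s| ≤ 1 / 2 → ∀ v : ℝ × ℝ,
        ‖((1, 0) : ℝ × ℝ) - ((1 / 2 : ℝ), s)‖ ^ 2 + ‖((1 / 2 : ℝ), s)‖ ^ 2 ≤
          ‖((1, 0) : ℝ × ℝ) - v‖ ^ 2 + ‖v‖ ^ 2) ∧
      ∃ u₁ u₂ : ℝ × ℝ, u₁ ≠ u₂ ∧
        (∀ v : ℝ × ℝ, ‖((1, 0) : ℝ × ℝ) - u₁‖ ^ 2 + ‖u₁‖ ^ 2 ≤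
          ‖((1, 0) : ℝ × ℝ) - v‖ ^ 2 + ‖v‖ ^ 2) ∧
        (∀ v : ℝ × ℝ, ‖((1, 0) : ℝ × ℝ) - u₂‖ ^ 2 + ‖u₂‖ ^ 2 ≤
          ‖((1, 0) : ℝ × ℝ) - v‖ ^ 2 + ‖v‖ ^ 2) := by
  refine ⟨aux_norm_mk, ⟨?_, ?_⟩, fun s hs v => aux_min s hs v, ?_⟩
  · rintro x ⟨u, rfl⟩
    exact aux_lb u
  · intro b hb
    have := hb ⟨((1/2 : ℝ), (0 : ℝ)), rfl⟩
    calc b ≤ _ := this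
    _ = 1/2 := aux_val_half 0 (by norm_num)
  · refine ⟨((1/2 : ℝ), (0 : ℝ)), ((1/2 : ℝ), (1/2 : ℝ)), ?_, ?_, ?_⟩
    · simp
    · exact aux_min 0 (by norm_num)
    · exact aux_min (1/2) (by rw [abs_of_nonneg] <;> norm_num)
end
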